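/- Let (G,·,∘) be a skew brace and let G' be a subset of G. Then G' is a strong left ideal of (G,·,∘) if and only if G' is both a left ideal of (G,·,∘) and a left ideal of the opposite skew brace (G,·op,∘), where σ ·op τ = τ·σ. -/

import Mathlib

/-! For the opposite brace, `γ_op(σ)(τ) = (σ ∘ τ) · σ⁻¹ = σ · γ(σ)(τ) · σ⁻¹`. Since `γ` is a
homomorphism from `(G, ∘)` to the endomorphisms of `(G, ·)`, each `γ(σ)` is a bijection with inverse
`γ(σ̄)` (`σ̄` the `∘`-inverse), so it maps a left ideal onto itself. Hence a left ideal is closed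
under `γ_op(σ)` exactly when it is closed under conjugation by `σ`. -/

def IsSkewBrace {G : Type*} (dot circ : Group G) : Prop :=
  ∀ σ τ κ : G,
    circ.mul σ (dot.mul τ κ) =
      dot.mul (dot.mul (circ.mul σ τ) (dot.inv σ)) (circ.mul σ κ)

def gammaFun {G : Type*} (dot circ : Group G) (σ τ : G) : G :=
  dot.mul (dot.inv σ) (circ.mul σ τ)

def IsSubgroupOf {G : Type*} (S : Group G) (H : Set G) : Prop :=
  S.one ∈ H ∧ (∀ a ∈ H, ∀ b ∈ H, S.mul a b ∈ H) ∧ (∀ a ∈ H, S.inv a ∈ H)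

def IsLeftIdeal {G : Type*} (dot circ : Group G) (H : Set G) : Prop :=
  IsSubgroupOf dot H ∧ ∀ σ : G, ∀ τ ∈ H, gammaFun dot circ σ τ ∈ H

def IsStrongLeftIdeal {G : Type*} (dot circ : Group G) (H : Set G) : Prop :=
  IsLeftIdeal dot circ H ∧
    ∀ σ : G, ∀ τ ∈ H, dot.mul (dot.mul σ τ) (dot.inv σ) ∈ H

def IsCharacteristicSubgroupOf {G : Type*} (S : Group G) (H : Set G) : Prop :=
  IsSubgroupOf S H ∧
    ∀ f : G ≃ G, (∀ a b : G, f (S.mul a b) = S.mul (f a) (f b)) → ∀ a ∈ H, f a ∈ H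

def oppGroup {G : Type*} (dot : Group G) : Group G :=
  letI := dot
  { mul := fun a b => b * a
    one := (1 : G)
    inv := fun a => a⁻¹
    div := fun a b => b⁻¹ * a
    div_eq_mul_inv := fun _ _ => rfl
    npow := fun n a => a ^ n
    npow_zero := fun a => pow_zero a
    npow_succ := fun n a => pow_succ' a n
    zpow := fun n a => a ^ n
    zpow_zero' := fun a => zpow_zero a
    zpow_succ' := by
      intro n a
      show a ^ ((n.succ : ℕ) : ℤ) = a * a ^ (n : ℤ)
      rw [zpow_natCast, zpow_natCast, pow_succ']
    zpow_neg' := by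
      intro n a
      show a ^ Int.negSucc n = (a ^ ((n.succ : ℕ) : ℤ))⁻¹
      rw [zpow_negSucc, zpow_natCast]
    mul_assoc := fun a b c => (mul_assoc c b a).symm
    one_mul := fun a => mul_one a
    mul_one := fun a => one_mul a
    inv_mul_cancel := fun a => mul_inv_cancel a }

def lam {G : Type*} (S : Group G) (σ : G) : Equiv.Perm G :=
  letI := S; Equiv.mulLeft σ

def rho {G : Type*} (S : Group G) (σ : G) : Equiv.Perm G :=
  letI := S; Equiv.mulRight σ⁻¹

section SkewBrace

variable {G : Type*} {dot circ : Group G}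

/- `dot` and `circ` are both local instances; in proofs, `let _ := dot` makes `*`, `⁻¹`, `1` denote
the `dot` operations, while the `circ` operations are always written out as fields. -/

namespace IsSkewBrace

theorem circ_mul_one (h : IsSkewBrace dot circ) (σ : G) : circ.mul σ dot.one = σ := by
  let _ := dot
  have hσ : circ.mul σ (1 * 1) = circ.mul σ 1 * σ⁻¹ * circ.mul σ 1 := h σ 1 1
  rw [one_mul, mul_assoc, left_eq_mul, inv_mul_eq_one] at hσ
  exact hσ.symm

theorem circ_one_eq (h : IsSkewBrace dot circ) : circ.one = dot.one := by
  have h1 : circ.mul circ.one dot.one = dot.one := circ.one_mul _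
  rw [← h1, h.circ_mul_one]

theorem gammaFun_mul (h : IsSkewBrace dot circ) (σ τ κ : G) :
    gammaFun dot circ σ (dot.mul τ κ) =
      dot.mul (gammaFun dot circ σ τ) (gammaFun dot circ σ κ) := by
  let _ := dot
  have hσ : circ.mul σ (τ * κ) = circ.mul σ τ * σ⁻¹ * circ.mul σ κ := h σ τ κ
  change σ⁻¹ * circ.mul σ (τ * κ) = σ⁻¹ * circ.mul σ τ * (σ⁻¹ * circ.mul σ κ)
  rw [hσ]
  group

theorem gammaFun_one (h : IsSkewBrace dot circ) (σ : G) :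
    gammaFun dot circ σ dot.one = dot.one := by
  let _ := dot
  have hσ : circ.mul σ 1 = σ := h.circ_mul_one σ
  change σ⁻¹ * circ.mul σ 1 = 1
  rw [hσ, inv_mul_cancel]

theorem gammaFun_inv (h : IsSkewBrace dot circ) (σ τ : G) :
    gammaFun dot circ σ (dot.inv τ) = dot.inv (gammaFun dot circ σ τ) := by
  let _ := dot
  refine eq_inv_of_mul_eq_one_left ?_
  have hmul : gammaFun dot circ σ (τ⁻¹ * τ) = gammaFun dot circ σ τ⁻¹ * gammaFun dot circ σ τ :=
    h.gammaFun_mul σ _ _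
  have hone : gammaFun dot circ σ 1 = 1 := h.gammaFun_one σ
  rw [← hmul, inv_mul_cancel, hone]

theorem gammaFun_circ_one (h : IsSkewBrace dot circ) (τ : G) :
    gammaFun dot circ circ.one τ = τ := by
  let _ := dot
  have hτ : circ.mul circ.one τ = τ := circ.one_mul τ
  have hone : circ.one = (1 : G) := h.circ_one_eq
  change circ.one⁻¹ * circ.mul circ.one τ = τ
  rw [hτ, hone, inv_one, one_mul]

theorem gammaFun_circ_mul (h : IsSkewBrace dot circ) (σ τ κ : G) :
    gammaFun dot circ (circ.mul σ τ) κ = gammaFun dot circ σ (gammaFun dot circ τ κ) := by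
  let _ := dot
  have hassoc : circ.mul (circ.mul σ τ) κ = circ.mul σ (circ.mul τ κ) := circ.mul_assoc σ τ κ
  have hmul : gammaFun dot circ σ (τ⁻¹ * circ.mul τ κ) =
      (gammaFun dot circ σ τ)⁻¹ * gammaFun dot circ σ (circ.mul τ κ) := by
    rw [← h.gammaFun_inv]; exact h.gammaFun_mul σ _ _
  change _ = gammaFun dot circ σ (τ⁻¹ * circ.mul τ κ)
  rw [hmul]
  change (circ.mul σ τ)⁻¹ * circ.mul (circ.mul σ τ) κ
    = (σ⁻¹ * circ.mul σ τ)⁻¹ * (σ⁻¹ * circ.mul σ (circ.mul τ κ))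
  rw [hassoc]
  group

theorem gammaFun_gammaFun_circ_inv (h : IsSkewBrace dot circ) (σ τ : G) :
    gammaFun dot circ σ (gammaFun dot circ (circ.inv σ) τ) = τ := by
  have hσ : circ.mul σ (circ.inv σ) = circ.one := @mul_inv_cancel G circ σ
  rw [← h.gammaFun_circ_mul, hσ, h.gammaFun_circ_one]

end IsSkewBrace

theorem gammaFun_oppGroup (σ τ : G) :
    gammaFun (oppGroup dot) circ σ τ =
      dot.mul (dot.mul σ (gammaFun dot circ σ τ)) (dot.inv σ) := by
  let _ := dot
  change circ.mul σ τ * σ⁻¹ = σ * (σ⁻¹ * circ.mul σ τ) * σ⁻¹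
  rw [mul_inv_cancel_left]

theorem IsSubgroupOf.oppGroup {H : Set G} (hH : IsSubgroupOf dot H) :
    IsSubgroupOf (oppGroup dot) H :=
  ⟨hH.1, fun a ha b hb => hH.2.1 b hb a ha, hH.2.2⟩

end SkewBrace

/-- A subset `G'` is a strong left ideal of a skew brace `(G,·,∘)` iff it is a
left ideal of both `(G,·,∘)` and the opposite skew brace `(G,·op,∘)`. -/
theorem stmt6 {G : Type*} (dot circ : Group G) (h : IsSkewBrace dot circ) (H : Set G) :
    IsStrongLeftIdeal dot circ H ↔
      IsLeftIdeal dot circ H ∧ IsLeftIdeal (oppGroup dot) circ H := by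
  constructor
  · rintro ⟨hH, hconj⟩
    refine ⟨hH, hH.1.oppGroup, fun σ τ hτ => ?_⟩
    rw [gammaFun_oppGroup]
    exact hconj σ _ (hH.2 σ τ hτ)
  · rintro ⟨hH, -, hopp⟩
    refine ⟨hH, fun σ τ hτ => ?_⟩
    have hmem := hopp σ _ (hH.2 (circ.inv σ) τ hτ)
    rwa [gammaFun_oppGroup, h.gammaFun_gammaFun_circ_inv] at hmem
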